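/- The generating function of the numbers R_{t,i} (coefficient of X^0 in (X^{-1}+t+X)^i) satisfies (∑_i R_{t,i} X^i)^2 = 1/(1 − 2tX + (t²−4)X²) as formal power series. -/

import Mathlib

/-!
Let `f = ∑ R_{t,i} X^i`, `q = 1 - 2tX + (t² - 4)X²` and `p = 1 + tX + X²`. Comparing
coefficients of `X^(n+2)` in an identity between `p^n, Xp^(n+1), X²p^n` and
`(X d/dX - (n+2))((X² - 1) p^(n+1))` gives the recurrence
`(n+2) R_{n+2} = (2n+3) t R_{n+1} - (n+1)(t²-4) R_n`. Together with `R_1 = t R_0` it says that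
`f` solves `q f' = (t - (t²-4)X) f`, i.e. `2 q f' + q' f = 0`. Hence `(f² q)' = 0`, and over the
torsion-free ring `ℤ` this forces `f² q` to equal its constant term `R_{t,0}² = 1`.
-/

open Polynomial PowerSeries

/-- `R t i` is the central coefficient of `(1 + t X + X²)^i`, equivalently the
constant coefficient of `(X⁻¹ + t + X)^i`. -/
noncomputable def R (t : ℤ) (i : ℕ) : ℤ :=
  (((1 + Polynomial.C t * Polynomial.X + Polynomial.X ^ 2 : Polynomial ℤ)) ^ i).coeff i

namespace Polynomial

theorem coeff_X_mul_derivative {S : Type*} [Semiring S] (p : S[X]) (n : ℕ) :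
    (X * derivative p).coeff n = n * p.coeff n := by
  cases n with
  | zero => simp
  | succ n => rw [coeff_X_mul, coeff_derivative, Nat.cast_comm]; push_cast; rfl

theorem coeff_pow_one_add_C_mul_X_add_X_sq_add_two {S : Type*} [CommRing S] (t : S) (n : ℕ) :
    ((n : S) + 2) * ((1 + C t * X + X ^ 2 : S[X]) ^ (n + 2)).coeff (n + 2)
      = (2 * n + 3) * t * ((1 + C t * X + X ^ 2 : S[X]) ^ (n + 1)).coeff (n + 1)
        - (n + 1) * (t ^ 2 - 4) * ((1 + C t * X + X ^ 2 : S[X]) ^ n).coeff n := by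
  set p : S[X] := 1 + C t * X + X ^ 2
  set g := (X ^ 2 - 1) * p ^ (n + 1)
  have hp' : derivative p = C t + 2 * X := by
    simp only [p, derivative_add, derivative_one, derivative_C_mul_X, derivative_X_sq,
      C_ofNat, zero_add]
  have key : C ((n : S) + 2) * p ^ (n + 2)
        - C ((2 * n + 3) * t) * (X * p ^ (n + 1))
        + C ((n + 1) * (t ^ 2 - 4)) * (X ^ 2 * p ^ n)
      = X * derivative g - C ((n : S) + 2) * g := by
    rw [derivative_mul, derivative_pow, hp', add_tsub_cancel_right, derivative_sub,
      derivative_X_sq, derivative_one, sub_zero]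
    simp only [g, p, map_add, map_sub, map_mul, map_pow, map_one, map_natCast, map_ofNat,
      Nat.cast_add, Nat.cast_one]
    ring
  have hg : (X * derivative g - C ((n : S) + 2) * g).coeff (n + 2) = 0 := by
    rw [coeff_sub, coeff_X_mul_derivative, coeff_C_mul]
    push_cast
    ring
  rw [← key] at hg
  simp only [coeff_sub, coeff_add, coeff_C_mul, coeff_X_mul,
    coeff_X_pow_mul] at hg
  linear_combination hg

end Polynomial

theorem PowerSeries.coeff_X_mul_derivative {S : Type*} [CommSemiring S] (f : S⟦X⟧) (n : ℕ) :
    coeff n (PowerSeries.X * d⁄dX S f) = n * coeff n f := by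
  cases n with
  | zero => simp
  | succ n => rw [coeff_succ_X_mul, PowerSeries.coeff_derivative, mul_comm]; push_cast; rfl

theorem R_zero (t : ℤ) : R t 0 = 1 := by simp [R]

theorem R_one (t : ℤ) : R t 1 = t := by simp [R, Polynomial.coeff_one]

theorem R_add_two (t : ℤ) (n : ℕ) :
    ((n : ℤ) + 2) * R t (n + 2)
      = (2 * n + 3) * t * R t (n + 1) - (n + 1) * (t ^ 2 - 4) * R t n :=
  Polynomial.coeff_pow_one_add_C_mul_X_add_X_sq_add_two t n

theorem mk_R_differential_equation (t : ℤ) :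
    (1 - PowerSeries.C (2 * t) * PowerSeries.X + PowerSeries.C (t ^ 2 - 4) * PowerSeries.X ^ 2)
        * d⁄dX ℤ (mk (R t))
      = (PowerSeries.C t - PowerSeries.C (t ^ 2 - 4) * PowerSeries.X) * mk (R t) := by
  set f := mk (R t)
  set c := t ^ 2 - 4
  have expand :
      (1 - PowerSeries.C (2 * t) * PowerSeries.X + PowerSeries.C c * PowerSeries.X ^ 2)
          * d⁄dX ℤ f - (PowerSeries.C t - PowerSeries.C c * PowerSeries.X) * f
        = d⁄dX ℤ f - PowerSeries.C (2 * t) * (PowerSeries.X * d⁄dX ℤ f)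
          + PowerSeries.C c * (PowerSeries.X * (PowerSeries.X * d⁄dX ℤ f))
          - PowerSeries.C t * f + PowerSeries.C c * (PowerSeries.X * f) := by
    ring
  rw [← sub_eq_zero, expand]
  ext (_ | n) <;>
    simp only [map_add, map_sub, PowerSeries.coeff_C_mul, coeff_zero_X_mul, coeff_succ_X_mul,
      PowerSeries.coeff_derivative, PowerSeries.coeff_X_mul_derivative, coeff_mk, f, map_zero,
      Nat.cast_succ]
  · rw [R_one, R_zero]; ring
  · linear_combination R_add_two t n

theorem stmt13 (t : ℤ) :
    (PowerSeries.mk fun i => R t i) ^ 2 *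
        (1 - PowerSeries.C (2 * t) * PowerSeries.X
           + PowerSeries.C (t ^ 2 - 4) * PowerSeries.X ^ 2)
      = 1 := by
  set f := mk (R t)
  set c := t ^ 2 - 4
  apply derivative.ext
  · have hq' :
        d⁄dX ℤ (1 - PowerSeries.C (2 * t) * PowerSeries.X + PowerSeries.C c * PowerSeries.X ^ 2)
          = 2 * (PowerSeries.C c * PowerSeries.X - PowerSeries.C t) := by
      simp only [map_add, map_sub, Derivation.leibniz, Derivation.leibniz_pow,
        PowerSeries.derivative_C, PowerSeries.derivative_X, PowerSeries.derivative_one, smul_eq_mul]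
      rw [map_mul, map_ofNat]
      ring
    rw [PowerSeries.derivative_one, Derivation.leibniz, Derivation.leibniz_pow, smul_eq_mul,
      smul_eq_mul, hq']
    linear_combination (2 * f) * mk_R_differential_equation t
  · simp [f, R_zero]
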